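/- Totality of the qubit subalgebra and its commutant: if a bounded operator T on H commutes with each of a₁, a₂, a₃, with U₁(θ) for every θ ∈ ℝ, and with V², then there exists c ∈ ℂ with T = c • (identity on H). -/

import Mathlib

open Complex

noncomputable section

/-- The Hilbert space `H := ℓ²(ℤ, ℂ)`. -/
abbrev H : Type := lp (fun _ : ℤ => ℂ) 2

/-- The orthonormal basis vectors `e ℓ = lp.single 2 ℓ 1`. -/
def e (ℓ : ℤ) : H := lp.single 2 ℓ 1
/-- `a₃ := U(π)`. -/
def a₃ (U : ℝ → (H →L[ℂ] H)) : H →L[ℂ] H := U Real.pi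

/-- `a₊ := (1/2) • ((1 − U(π)) ∘ V*)`. -/
def aPlus (U : ℝ → (H →L[ℂ] H)) (V : unitary (H →L[ℂ] H)) : H →L[ℂ] H :=
  ((1 : ℂ) / 2) • ((1 - U Real.pi) ∘L star (V : H →L[ℂ] H))

/-- `a₋ := (1/2) • ((1 + U(π)) ∘ V)`. -/
def aMinus (U : ℝ → (H →L[ℂ] H)) (V : unitary (H →L[ℂ] H)) : H →L[ℂ] H :=
  ((1 : ℂ) / 2) • ((1 + U Real.pi) ∘L (V : H →L[ℂ] H))

/-- `a₁ := a₊ + a₋`. -/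
def a₁ (U : ℝ → (H →L[ℂ] H)) (V : unitary (H →L[ℂ] H)) : H →L[ℂ] H :=
  aPlus U V + aMinus U V

/-- `a₂ := −i•a₊ + i•a₋`. -/
def a₂ (U : ℝ → (H →L[ℂ] H)) (V : unitary (H →L[ℂ] H)) : H →L[ℂ] H :=
  (-Complex.I) • aPlus U V + Complex.I • aMinus U V

/-- `U₁(θ) := exp(−iθ/2) • (cos(θ/2) • U(θ) + (i·sin(θ/2)) • U(θ+π))`. -/
def U₁ (U : ℝ → (H →L[ℂ] H)) (θ : ℝ) : H →L[ℂ] H :=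
  Complex.exp (-Complex.I * θ / 2) •
    ((Real.cos (θ / 2) : ℂ) • U θ + (Complex.I * Real.sin (θ / 2)) • U (θ + Real.pi))

/-! The operators `a₃ = U(π)` and `U₁(θ)` are diagonal in the basis `e`, with eigenvalues
`(-1)^ℓ` and `exp(i (ℓ - ℓ % 2) θ)` on `e ℓ`. These separate the basis vectors, so an operator
commuting with all of them is diagonal. Commuting with `V²` (which maps `e ℓ` to `e (ℓ + 2)`)
and with `a₁` (which maps `e ℓ` to `e (ℓ + 1)` for odd `ℓ`) then forces all diagonal entries
to agree. -/

namespace lp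

open scoped ENNReal

variable {ι 𝕜 : Type*} [DecidableEq ι] [NormedField 𝕜] {p : ℝ≥0∞}

local notation "ℓᵖ" => lp (fun _ : ι => 𝕜) p

theorem eq_smul_single_one_of_apply_eq_zero {f : ℓᵖ} {i : ι}
    (hf : ∀ j ≠ i, f j = 0) : f = f i • lp.single p i (1 : 𝕜) := by
  ext j
  rcases eq_or_ne j i with rfl | hj
  · simp
  · simp [hf j hj, hj]

theorem single_eq_smul_single_one (i : ι) (a : 𝕜) :
    (lp.single p i a : ℓᵖ) = a • lp.single p i (1 : 𝕜) := by
  rw [← lp.single_smul, smul_eq_mul, mul_one]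

variable [Fact (1 ≤ p)]

theorem apply_apply_of_apply_single_one (hp : p ≠ ∞) {A : ℓᵖ →L[𝕜] ℓᵖ}
    {d : ι → 𝕜} (hA : ∀ i, A (lp.single p i (1 : 𝕜)) = d i • lp.single p i (1 : 𝕜))
    (f : ℓᵖ) (j : ι) : A f j = d j * f j := by
  have hsum : HasSum (fun i => lp.single p i (d i * f i)) (A f) := by
    convert (lp.hasSum_single hp f).mapL A using 2 with i
    rw [single_eq_smul_single_one i (f i), map_smul, hA, smul_smul, mul_comm,
      ← single_eq_smul_single_one]
  have hj : HasSum (fun i => (lp.single p i (d i * f i) : ℓᵖ) j) (A f j) :=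
    hsum.mapL (lp.evalCLM 𝕜 (fun _ : ι => 𝕜) p j)
  refine hj.unique ?_
  convert hasSum_single (f := fun i => (lp.single p i (d i * f i) : ℓᵖ) j) j
    fun i hi => lp.single_apply_ne p i _ (Ne.symm hi)
  simp

theorem eq_smul_one_of_apply_single_one (hp : p ≠ ∞) {A : ℓᵖ →L[𝕜] ℓᵖ} {c : 𝕜}
    (hA : ∀ i, A (lp.single p i (1 : 𝕜)) = c • lp.single p i (1 : 𝕜)) : A = c • 1 := by
  ext f j
  simp [apply_apply_of_apply_single_one hp hA]

theorem apply_single_one_apply_eq_zero_of_commute (hp : p ≠ ∞) {A T : ℓᵖ →L[𝕜] ℓᵖ}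
    {d : ι → 𝕜} (hA : ∀ i, A (lp.single p i (1 : 𝕜)) = d i • lp.single p i (1 : 𝕜))
    (hTA : Commute T A) {i j : ι} (hd : d j ≠ d i) : T (lp.single p i (1 : 𝕜)) j = 0 := by
  have h := congr($hTA (lp.single p i (1 : 𝕜)) j)
  simp only [mul_apply_eq_comp, hA, map_smul, lp.coeFn_smul, Pi.smul_apply,
    smul_eq_mul, apply_apply_of_apply_single_one hp hA] at h
  by_contra hx
  exact hd (mul_right_cancel₀ hx h).symm

theorem apply_eq_of_commute_of_apply_single_one {S T : ℓᵖ →L[𝕜] ℓᵖ} {d : ι → 𝕜}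
    (hT : ∀ i, T (lp.single p i (1 : 𝕜)) = d i • lp.single p i (1 : 𝕜)) {i j : ι}
    (hS : S (lp.single p i (1 : 𝕜)) = lp.single p j (1 : 𝕜)) (hTS : Commute T S) : d j = d i := by
  have h := congr($hTS (lp.single p i (1 : 𝕜)) j)
  simpa [mul_apply_eq_comp, hS, hT] using h

end lp

theorem Complex.exists_exp_int_mul_ne {a b : ℤ} (hab : a ≠ b) :
    ∃ θ : ℝ, exp (I * a * θ) ≠ exp (I * b * θ) := by
  refine ⟨Real.pi / (a - b), fun h => ?_⟩
  have hab' : (a - b : ℂ) ≠ 0 := sub_ne_zero.mpr (mod_cast hab)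
  have hshift : I * a * ((Real.pi / (a - b) : ℝ) : ℂ) =
      I * b * ((Real.pi / (a - b) : ℝ) : ℂ) + Real.pi * I := by
    push_cast
    field_simp
    ring
  rw [hshift, exp_add, exp_pi_mul_I, mul_neg_one, neg_eq_self] at h
  exact exp_ne_zero _ h

theorem Complex.exp_I_int_mul_pi (ℓ : ℤ) : exp (I * ℓ * Real.pi) = (-1) ^ ℓ := by
  rw [show I * ℓ * Real.pi = ℓ * (Real.pi * I) by ring, exp_int_mul, exp_pi_mul_I]

theorem Complex.exp_neg_half_mul_cos_add_sin_mul_neg_one_zpow (θ : ℝ) (ℓ : ℤ) :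
    exp (-I * θ / 2) * (cos (θ / 2) + I * sin (θ / 2) * (-1) ^ ℓ) * exp (I * ℓ * θ) =
      exp (I * (ℓ - ℓ % 2 : ℤ) * θ) := by
  rcases Int.even_or_odd ℓ with hℓ | hℓ
  · have hcs : cos (θ / 2 : ℂ) + I * sin (θ / 2) * (-1) ^ ℓ = exp (θ / 2 * I) := by
      rw [hℓ.neg_one_zpow, exp_mul_I]; ring
    rw [hcs, ← exp_add, ← exp_add, Int.even_iff.mp hℓ]
    congr 1; push_cast; ring
  · have hcs : cos (θ / 2 : ℂ) + I * sin (θ / 2) * (-1) ^ ℓ = exp (-(θ / 2) * I) := by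
      rw [hℓ.neg_one_zpow, exp_mul_I, cos_neg, sin_neg]; ring
    rw [hcs, ← exp_add, ← exp_add, Int.odd_iff.mp hℓ]
    congr 1; push_cast; ring

section Operators

variable {U : ℝ → (H →L[ℂ] H)} {V : unitary (H →L[ℂ] H)}

theorem U₁_apply_e (hU : ∀ (θ : ℝ) (ℓ : ℤ), U θ (e ℓ) = exp (I * ℓ * θ) • e ℓ) (θ : ℝ) (ℓ : ℤ) :
    U₁ U θ (e ℓ) = exp (I * (ℓ - ℓ % 2 : ℤ) * θ) • e ℓ := by
  have hπ : exp (I * ℓ * ((θ + Real.pi : ℝ) : ℂ)) = (-1) ^ ℓ * exp (I * ℓ * θ) := by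
    rw [← exp_I_int_mul_pi, ← exp_add]
    congr 1
    push_cast
    ring
  simp only [U₁, smul_apply, add_apply, hU, hπ, smul_smul, ← add_smul]
  rw [← exp_neg_half_mul_cos_add_sin_mul_neg_one_zpow]
  congr 1
  push_cast
  ring

theorem star_V_apply_e (hV : ∀ ℓ : ℤ, (V : H →L[ℂ] H) (e ℓ) = e (ℓ + 1)) (ℓ : ℤ) :
    star (V : H →L[ℂ] H) (e ℓ) = e (ℓ - 1) := by
  rw [← sub_add_cancel ℓ 1, ← hV, ← mul_apply_eq_comp, Unitary.coe_star_mul_self,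
    add_sub_cancel_right, one_apply_eq_self]

theorem V_sq_apply_e (hV : ∀ ℓ : ℤ, (V : H →L[ℂ] H) (e ℓ) = e (ℓ + 1)) (ℓ : ℤ) :
    ((V : H →L[ℂ] H) ^ 2) (e ℓ) = e (ℓ + 2) := by
  rw [sq, mul_apply_eq_comp, hV, hV, add_assoc, one_add_one_eq_two]

theorem a₁_apply_e_of_odd (hU : ∀ (θ : ℝ) (ℓ : ℤ), U θ (e ℓ) = exp (I * ℓ * θ) • e ℓ)
    (hV : ∀ ℓ : ℤ, (V : H →L[ℂ] H) (e ℓ) = e (ℓ + 1)) {ℓ : ℤ} (hℓ : Odd ℓ) :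
    a₁ U V (e ℓ) = e (ℓ + 1) := by
  have hsub : (-1 : ℂ) ^ (ℓ - 1) = 1 := (hℓ.sub_odd odd_one).neg_one_zpow
  have hadd : (-1 : ℂ) ^ (ℓ + 1) = 1 := (hℓ.add_odd odd_one).neg_one_zpow
  simp only [a₁, aPlus, aMinus, add_apply, smul_apply,
    ContinuousLinearMap.comp_apply, star_V_apply_e hV, hV, sub_apply, one_apply_eq_self, hU, exp_I_int_mul_pi, hsub, hadd]
  module

theorem apply_e_apply_eq_zero_of_commute
    (hU : ∀ (θ : ℝ) (ℓ : ℤ), U θ (e ℓ) = exp (I * ℓ * θ) • e ℓ) {T : H →L[ℂ] H}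
    (h₃ : Commute T (a₃ U)) (hU₁ : ∀ θ : ℝ, Commute T (U₁ U θ)) {ℓ j : ℤ} (hne : j ≠ ℓ) :
    T (e ℓ) j = 0 := by
  rcases eq_or_ne (j % 2) (ℓ % 2) with hpar | hpar
  · obtain ⟨θ, hθ⟩ := exists_exp_int_mul_ne (show j - j % 2 ≠ ℓ - ℓ % 2 by omega)
    exact lp.apply_single_one_apply_eq_zero_of_commute ENNReal.ofNat_ne_top (U₁_apply_e hU θ)
      (hU₁ θ) hθ
  · refine lp.apply_single_one_apply_eq_zero_of_commute ENNReal.ofNat_ne_top (hU Real.pi) h₃ ?_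
    simp only [exp_I_int_mul_pi, neg_one_zpow_eq_ite, Int.even_iff]
    split_ifs <;> first | omega | norm_num

end Operators

/-- **Totality of the qubit subalgebra and its commutant:** a bounded operator
commuting with `a₁, a₂, a₃`, with every `U₁(θ)` and with `V²` is a scalar multiple
of the identity. -/
theorem qubit_and_commutant_total
    (U : ℝ → (H →L[ℂ] H)) (V : unitary (H →L[ℂ] H))
    (hU : ∀ (θ : ℝ) (ℓ : ℤ), U θ (e ℓ) = Complex.exp (Complex.I * ℓ * θ) • e ℓ)
    (hV : ∀ ℓ : ℤ, (V : H →L[ℂ] H) (e ℓ) = e (ℓ + 1)) :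
    ∀ T : H →L[ℂ] H,
      T ∘L a₁ U V = a₁ U V ∘L T →
      T ∘L a₂ U V = a₂ U V ∘L T →
      T ∘L a₃ U = a₃ U ∘L T →
      (∀ θ : ℝ, T ∘L U₁ U θ = U₁ U θ ∘L T) →
      T ∘L ((V : H →L[ℂ] H) ^ 2) = ((V : H →L[ℂ] H) ^ 2) ∘L T →
      ∃ c : ℂ, T = c • (1 : H →L[ℂ] H) := by
  intro T h₁ _ h₃ hU₁ hV₂
  set c : ℤ → ℂ := fun ℓ => T (e ℓ) ℓ
  have hdiag (ℓ : ℤ) : T (e ℓ) = c ℓ • e ℓ :=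
    lp.eq_smul_single_one_of_apply_eq_zero fun _ hj => apply_e_apply_eq_zero_of_commute hU h₃ hU₁ hj
  have hc_add_two (ℓ : ℤ) : c (ℓ + 2) = c ℓ :=
    lp.apply_eq_of_commute_of_apply_single_one hdiag (V_sq_apply_e hV ℓ) hV₂
  have hc_add_one_of_odd {ℓ : ℤ} (hℓ : Odd ℓ) : c (ℓ + 1) = c ℓ :=
    lp.apply_eq_of_commute_of_apply_single_one hdiag (a₁_apply_e_of_odd hU hV hℓ) h₁
  have hc : Function.Periodic c 1 := fun ℓ => by
    rcases Int.even_or_odd ℓ with hℓ | hℓ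
    · rw [← hc_add_one_of_odd hℓ.add_one, add_assoc, one_add_one_eq_two, hc_add_two]
    · exact hc_add_one_of_odd hℓ
  refine ⟨c 0, lp.eq_smul_one_of_apply_single_one ENNReal.ofNat_ne_top fun ℓ => ?_⟩
  show T (e ℓ) = c 0 • e ℓ
  rw [hdiag ℓ, ← hc.int_mul_eq ℓ, Int.cast_id, mul_one]
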